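/- Let ε > 0 and let α, β ∈ ℂ satisfy εα ≠ 2, εα ≠ -2, εβ ≠ 2, εβ ≠ -2 and 4 + ε²αβ ≠ 0. Define α⊕β := (α + β)/(1 + ε²αβ/4). Then ε(α⊕β) ≠ 2 and ε(α⊕β) ≠ -2, and for all n, m ∈ ℤ: (1) E_α(n+1) = ((1 + εα/2)/(1 - εα/2))·E_α(n); (2) E_α(n)·E_{-α}(n) = 1; (3) conj(E_α(n)) = E_{conj(α)}(n); (4) E_α(n)·E_α(m) = E_α(n+m); (5) E_α(n)·E_β(n) = E_{α⊕β}(n). -/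

import Mathlib

/-- The Cayley-exponential function on the time scale εℤ:
E_α(n) = ((1 + εα/2)/(1 - εα/2))^n. -/
noncomputable def cayleyExp (ε : ℝ) (α : ℂ) (n : ℤ) : ℂ :=
  ((1 + (ε : ℂ) * α / 2) / (1 - (ε : ℂ) * α / 2)) ^ n

/-!
Writing `E_α(n) = c(εα)^n` with the Cayley transform `c(z) = (1 + z/2)/(1 - z/2)`, properties
(1)–(4) are the laws of integer powers of the nonzero number `c(εα)`, together with
`c(-z) = c(z)⁻¹` and `conj (c z) = c (conj z)`. Property (5) and the regressivity of `α ⊕ β`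
come from the factorisations
`(1 ± (a ⊕ b)/2) (1 + ab/4) = (1 ± a/2)(1 ± b/2)`, where `a ⊕ b = (a + b)/(1 + ab/4)`.
-/

section Cayley

variable {K : Type*} [Field K]

def cayley (z : K) : K := (1 + z / 2) / (1 - z / 2)

def cayleyAdd (a b : K) : K := (a + b) / (1 + a * b / 4)

theorem cayley_neg (z : K) : cayley (-z) = (cayley z)⁻¹ := by
  rw [cayley, cayley, inv_div, neg_div, sub_neg_eq_add, ← sub_eq_add_neg]

theorem one_add_cayleyAdd_div_two_mul {a b : K} (hD : 1 + a * b / 4 ≠ 0) :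
    (1 + cayleyAdd a b / 2) * (1 + a * b / 4) = (1 + a / 2) * (1 + b / 2) := by
  -- `ring` does not identify `4⁻¹` with `2⁻¹ ^ 2` in a field of unknown characteristic
  rw [cayleyAdd, add_mul, div_mul_eq_mul_div, div_mul_cancel₀ _ hD,
    show (4 : K) = 2 * 2 by norm_num, ← div_div]
  ring

theorem one_sub_cayleyAdd_div_two_mul {a b : K} (hD : 1 + a * b / 4 ≠ 0) :
    (1 - cayleyAdd a b / 2) * (1 + a * b / 4) = (1 - a / 2) * (1 - b / 2) := by
  rw [cayleyAdd, sub_mul, div_mul_eq_mul_div, div_mul_cancel₀ _ hD,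
    show (4 : K) = 2 * 2 by norm_num, ← div_div]
  ring

theorem cayley_mul_cayley {a b : K} (hD : 1 + a * b / 4 ≠ 0) :
    cayley a * cayley b = cayley (cayleyAdd a b) := by
  rw [cayley, cayley, cayley, div_mul_div_comm, ← one_add_cayleyAdd_div_two_mul hD,
    ← one_sub_cayleyAdd_div_two_mul hD, mul_div_mul_right _ _ hD]

variable [NeZero (2 : K)]

theorem one_add_half_ne_zero {z : K} (hz : z ≠ -2) : 1 + z / 2 ≠ 0 := by
  contrapose! hz
  field_simp at hz
  linear_combination hz

theorem one_sub_half_ne_zero {z : K} (hz : z ≠ 2) : 1 - z / 2 ≠ 0 := by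
  contrapose! hz
  field_simp at hz
  linear_combination -hz

theorem cayleyAdd_ne_neg_two {a b : K} (ha : a ≠ -2) (hb : b ≠ -2) (hD : 1 + a * b / 4 ≠ 0) :
    cayleyAdd a b ≠ -2 := by
  intro h
  have := one_add_cayleyAdd_div_two_mul hD
  rw [h, neg_div, div_self two_ne_zero, add_neg_cancel, zero_mul] at this
  exact mul_ne_zero (one_add_half_ne_zero ha) (one_add_half_ne_zero hb) this.symm

theorem cayleyAdd_ne_two {a b : K} (ha : a ≠ 2) (hb : b ≠ 2) (hD : 1 + a * b / 4 ≠ 0) :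
    cayleyAdd a b ≠ 2 := by
  intro h
  have := one_sub_cayleyAdd_div_two_mul hD
  rw [h, div_self two_ne_zero, sub_self, zero_mul] at this
  exact mul_ne_zero (one_sub_half_ne_zero ha) (one_sub_half_ne_zero hb) this.symm

end Cayley

theorem Complex.conj_cayley (z : ℂ) : starRingEnd ℂ (cayley z) = cayley (starRingEnd ℂ z) := by
  simp [cayley, map_ofNat]

theorem cayleyExp_eq_cayley_zpow (ε : ℝ) (α : ℂ) (n : ℤ) :
    cayleyExp ε α n = cayley ((ε : ℂ) * α) ^ n :=
  rfl

theorem stmt5 (ε : ℝ) (α β : ℂ)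
    (hα : (ε : ℂ) * α ≠ 2) (hα' : (ε : ℂ) * α ≠ -2)
    (hβ : (ε : ℂ) * β ≠ 2) (hβ' : (ε : ℂ) * β ≠ -2)
    (hαβ : 4 + (ε : ℂ) ^ 2 * α * β ≠ 0) :
    ((ε : ℂ) * ((α + β) / (1 + (ε : ℂ) ^ 2 * α * β / 4)) ≠ 2 ∧
     (ε : ℂ) * ((α + β) / (1 + (ε : ℂ) ^ 2 * α * β / 4)) ≠ -2) ∧
    ∀ n m : ℤ,
      cayleyExp ε α (n + 1)
        = ((1 + (ε : ℂ) * α / 2) / (1 - (ε : ℂ) * α / 2)) * cayleyExp ε α n ∧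
      cayleyExp ε α n * cayleyExp ε (-α) n = 1 ∧
      (starRingEnd ℂ) (cayleyExp ε α n) = cayleyExp ε ((starRingEnd ℂ) α) n ∧
      cayleyExp ε α n * cayleyExp ε α m = cayleyExp ε α (n + m) ∧
      cayleyExp ε α n * cayleyExp ε β n
        = cayleyExp ε ((α + β) / (1 + (ε : ℂ) ^ 2 * α * β / 4)) n := by
  have hD : 1 + (ε : ℂ) * α * ((ε : ℂ) * β) / 4 ≠ 0 := by
    contrapose! hαβ
    linear_combination 4 * hαβ
  have hsum : (ε : ℂ) * ((α + β) / (1 + (ε : ℂ) ^ 2 * α * β / 4)) =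
      cayleyAdd ((ε : ℂ) * α) ((ε : ℂ) * β) := by
    rw [cayleyAdd]
    ring
  have hc : cayley ((ε : ℂ) * α) ≠ 0 :=
    div_ne_zero (one_add_half_ne_zero hα') (one_sub_half_ne_zero hα)
  simp only [cayleyExp_eq_cayley_zpow, hsum]
  refine ⟨⟨cayleyAdd_ne_two hα hβ hD, cayleyAdd_ne_neg_two hα' hβ' hD⟩,
    fun n m => ⟨?_, ?_, ?_, ?_, ?_⟩⟩
  · rw [zpow_add_one₀ hc, mul_comm, cayley]
  · rw [mul_neg, cayley_neg, inv_zpow, mul_inv_cancel₀ (zpow_ne_zero n hc)]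
  · rw [map_zpow₀, Complex.conj_cayley, map_mul, Complex.conj_ofReal]
  · rw [zpow_add₀ hc]
  · rw [← mul_zpow, cayley_mul_cayley hD]
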